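/- arXiv:2404.03999 — 3 statements merged into one kernel-verified Lean document; each statement's English description precedes it below -/
import Mathlib

section
/- Let M be symmetric positive definite and ω ∈ ℝ^d with ω^⊤ M^{-1} ω < 1. Define α = 1 - ω^⊤ M^{-1} ω, M* = (1/α²)(α M^{-1} + (M^{-1}ω)(M^{-1}ω)^⊤), and ω* = -(1/α) M^{-1} ω. Then ω*^⊤ (M*)^{-1} ω* < 1. -/
open Matrix

private lemma mul_vecMulVec' {d : ℕ} (A : Matrix (Fin d) (Fin d) ℝ) (b c : Fin d → ℝ) :
    A * vecMulVec b c = vecMulVec (A *ᵥ b) c := by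
  ext i j
  simp [Matrix.mul_apply, vecMulVec_apply, Matrix.mulVec, dotProduct,
    Finset.sum_mul, mul_assoc]

private lemma vecMulVec_mul' {d : ℕ} (A : Matrix (Fin d) (Fin d) ℝ) (b c : Fin d → ℝ) :
    vecMulVec b c * A = vecMulVec b (c ᵥ* A) := by
  ext i j
  simp [Matrix.mul_apply, vecMulVec_apply, Matrix.vecMul, dotProduct,
    Finset.mul_sum, mul_assoc]

private lemma vecMulVec_mul_vecMulVec' {d : ℕ} (a b c e : Fin d → ℝ) :
    vecMulVec a b * vecMulVec c e = (b ⬝ᵥ c) • vecMulVec a e := by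
  ext i j
  simp [Matrix.mul_apply, vecMulVec_apply, dotProduct, Finset.sum_mul,
    Finset.mul_sum]
  ring_nf
  exact Finset.sum_congr rfl fun k _ => by ring

private lemma vecMulVec_mulVec' {d : ℕ} (a b c : Fin d → ℝ) :
    vecMulVec a b *ᵥ c = (b ⬝ᵥ c) • a := by
  ext i
  simp [Matrix.mulVec, vecMulVec_apply, dotProduct, Finset.mul_sum,
    Finset.sum_mul, mul_assoc, mul_comm, mul_left_comm]

theorem dual_randers_omega_bound {d : ℕ} (M : Matrix (Fin d) (Fin d) ℝ)
    (hM : M.PosDef) (ω : Fin d → ℝ) (hω : ω ⬝ᵥ M⁻¹ *ᵥ ω < 1)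
    (α : ℝ) (hα : α = 1 - ω ⬝ᵥ M⁻¹ *ᵥ ω)
    (Mstar : Matrix (Fin d) (Fin d) ℝ)
    (hMstar : Mstar = (1 / α ^ 2) •
      (α • M⁻¹ + vecMulVec (M⁻¹ *ᵥ ω) (M⁻¹ *ᵥ ω)))
    (ωstar : Fin d → ℝ) (hωstar : ωstar = -(1 / α) • (M⁻¹ *ᵥ ω)) :
    ωstar ⬝ᵥ Mstar⁻¹ *ᵥ ωstar < 1 := by
  set v : Fin d → ℝ := M⁻¹ *ᵥ ω with hv
  set s : ℝ := ω ⬝ᵥ v with hs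
  have hα0 : α ≠ 0 := by rw [hα]; intro h; rw [sub_eq_zero] at h; exact absurd h.symm (ne_of_lt hω)
  have hMdet : IsUnit M.det := isUnit_iff_ne_zero.mpr hM.det_pos.ne'
  have hMsymm : Mᵀ = M := hM.isHermitian.eq
  have hMv : M *ᵥ v = ω := by
    rw [hv, Matrix.mulVec_mulVec, Matrix.mul_nonsing_inv M hMdet, Matrix.one_mulVec]
  have hvM : v ᵥ* M = ω := by
    rw [← Matrix.mulVec_transpose, hMsymm, hMv]
  have hvw : v ⬝ᵥ ω = s := dotProduct_comm v ω
  have hsα : s = 1 - α := by rw [hα]; ring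
  -- The explicit inverse of Mstar
  have hinv : Mstar * (α • (M - vecMulVec ω ω)) = 1 := by
    rw [hMstar, Matrix.smul_mul, Matrix.mul_smul, Matrix.add_mul, Matrix.mul_sub,
      Matrix.mul_sub, Matrix.smul_mul, Matrix.smul_mul,
      Matrix.nonsing_inv_mul M hMdet, mul_vecMulVec', vecMulVec_mul', hvM, ← hv,
      vecMulVec_mul_vecMulVec', hvw, hsα]
    have hbr : α • (1 : Matrix (Fin d) (Fin d) ℝ) - α • vecMulVec v ω +
        (vecMulVec v ω - (1 - α) • vecMulVec v ω) = α • 1 := by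
      module
    rw [hbr, smul_smul, smul_smul]
    rw [show (1 / α ^ 2 * α * α) = 1 by field_simp, one_smul]
  have hMinv : Mstar⁻¹ = α • (M - vecMulVec ω ω) := Matrix.inv_eq_right_inv hinv
  have hval : ωstar ⬝ᵥ Mstar⁻¹ *ᵥ ωstar = s := by
    rw [hMinv, hωstar]
    rw [Matrix.mulVec_smul, Matrix.smul_mulVec, Matrix.sub_mulVec, hMv,
      vecMulVec_mulVec']
    simp only [neg_smul, dotProduct_neg, neg_dotProduct, smul_dotProduct,
      dotProduct_smul, dotProduct_sub, smul_eq_mul, hvw, ← hs]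
    rw [hsα]
    field_simp
    ring
  rw [hval, hsα] at *
  linarith [hω]
end

section
/- Let F(v) = ‖v‖_M + ⟨ω, v⟩ be a Randers metric with ω^⊤ M^{-1}ω < 1, and F*(v) = max{⟨v, b⟩ : F(b) ≤ 1} its dual. Then F*(v) = ‖v‖_{M*} + ⟨ω*, v⟩, where α = 1 - ω^⊤ M^{-1}ω, M* = (1/α²)(α M^{-1} + (M^{-1}ω)(M^{-1}ω)^⊤), and ω* = -(1/α)M^{-1}ω. That is, the dual of a Randers metric is a Randers metric with data (M*, ω*). -/
open Matrix

namespace RandersDualAux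

variable {d : ℕ}

lemma vecMulVec_mulVec' (a b x : Fin d → ℝ) :
    vecMulVec a b *ᵥ x = (b ⬝ᵥ x) • a := by
  ext i
  simp only [Matrix.mulVec, Matrix.vecMulVec_apply, dotProduct, Pi.smul_apply, smul_eq_mul]
  rw [Finset.sum_mul]
  refine Finset.sum_congr rfl fun k _ => by ring

lemma mul_vecMulVec (M : Matrix (Fin d) (Fin d) ℝ) (a b : Fin d → ℝ) :
    M * vecMulVec a b = vecMulVec (M *ᵥ a) b := by
  ext i j
  simp only [Matrix.mul_apply, Matrix.vecMulVec_apply, Matrix.mulVec, dotProduct]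
  rw [Finset.sum_mul]
  refine Finset.sum_congr rfl fun k _ => by ring

lemma vecMulVec_mul (a b : Fin d → ℝ) (M : Matrix (Fin d) (Fin d) ℝ) :
    vecMulVec a b * M = vecMulVec a (b ᵥ* M) := by
  ext i j
  simp only [Matrix.mul_apply, Matrix.vecMulVec_apply, Matrix.vecMul, dotProduct]
  rw [Finset.mul_sum]
  refine Finset.sum_congr rfl fun k _ => by ring

lemma vecMulVec_mul_vecMulVec (a b c e : Fin d → ℝ) :
    vecMulVec a b * vecMulVec c e = (b ⬝ᵥ c) • vecMulVec a e := by
  ext i j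
  simp only [Matrix.mul_apply, Matrix.vecMulVec_apply, dotProduct, Pi.smul_apply, smul_eq_mul,
    Matrix.smul_apply]
  rw [Finset.sum_mul]
  refine Finset.sum_congr rfl fun k _ => by ring

lemma transpose_vecMulVec (a b : Fin d → ℝ) :
    (vecMulVec a b)ᵀ = vecMulVec b a := by
  ext i j
  simp [Matrix.vecMulVec_apply, mul_comm]

lemma dot_symm {N : Matrix (Fin d) (Fin d) ℝ} (hN : Nᵀ = N) (x y : Fin d → ℝ) :
    x ⬝ᵥ N *ᵥ y = y ⬝ᵥ N *ᵥ x := by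
  rw [dotProduct_mulVec, ← Matrix.mulVec_transpose, hN, dotProduct_comm]

lemma cs {N : Matrix (Fin d) (Fin d) ℝ} (hN : N.PosSemidef) (x y : Fin d → ℝ) :
    (x ⬝ᵥ N *ᵥ y) ^ 2 ≤ (x ⬝ᵥ N *ᵥ x) * (y ⬝ᵥ N *ᵥ y) := by
  have hNsym : Nᵀ = N := by
    have := hN.1
    rwa [Matrix.IsHermitian, conjTranspose_eq_transpose_of_trivial] at this
  have key : ∀ t : ℝ, 0 ≤ (y ⬝ᵥ N *ᵥ y) * (t * t) + (2 * (x ⬝ᵥ N *ᵥ y)) * t + (x ⬝ᵥ N *ᵥ x) := by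
    intro t
    have h := hN.dotProduct_mulVec_nonneg (x + t • y)
    simp only [star_trivial] at h
    rw [Matrix.mulVec_add, Matrix.mulVec_smul, dotProduct_add, add_dotProduct,
      add_dotProduct, dotProduct_smul, smul_dotProduct, smul_dotProduct,
      dotProduct_smul] at h
    simp only [smul_eq_mul] at h
    have hsymm := dot_symm hNsym y x
    rw [hsymm] at h
    nlinarith [h]
  have hd := discrim_le_zero key
  rw [discrim] at hd
  nlinarith [hd]

end RandersDualAux

/-- The dual of a Randers metric is a Randers metric with data `(M*, ω*)`. -/
theorem dual_randers_metric_formula {d : ℕ} (M : Matrix (Fin d) (Fin d) ℝ)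
    (hM : M.PosDef) (ω : Fin d → ℝ) (hω : ω ⬝ᵥ M⁻¹ *ᵥ ω < 1)
    (F : (Fin d → ℝ) → ℝ)
    (hF : ∀ v, F v = Real.sqrt (v ⬝ᵥ M *ᵥ v) + ω ⬝ᵥ v)
    (Fstar : (Fin d → ℝ) → ℝ)
    (hFstar : ∀ v, Fstar v = sSup {x : ℝ | ∃ b : Fin d → ℝ, F b ≤ 1 ∧ x = v ⬝ᵥ b})
    (α : ℝ) (hα : α = 1 - ω ⬝ᵥ M⁻¹ *ᵥ ω)
    (Mstar : Matrix (Fin d) (Fin d) ℝ)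
    (hMstar : Mstar = (1 / α ^ 2) •
      (α • M⁻¹ + vecMulVec (M⁻¹ *ᵥ ω) (M⁻¹ *ᵥ ω)))
    (ωstar : Fin d → ℝ) (hωstar : ωstar = -(1 / α) • (M⁻¹ *ᵥ ω)) :
    ∀ v, Fstar v = Real.sqrt (v ⬝ᵥ Mstar *ᵥ v) + ωstar ⬝ᵥ v := by
  intro v
  set a : Fin d → ℝ := M⁻¹ *ᵥ ω with ha
  set N : Matrix (Fin d) (Fin d) ℝ := M - vecMulVec ω ω with hN
  set K : Matrix (Fin d) (Fin d) ℝ := α • Mstar with hKdef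
  have hα0 : 0 < α := by rw [hα]; linarith
  have hα' : α ≠ 0 := ne_of_gt hα0
  have hMsym : Mᵀ = M := by
    have := hM.1
    rwa [Matrix.IsHermitian, conjTranspose_eq_transpose_of_trivial] at this
  have hMinvsym : M⁻¹ᵀ = M⁻¹ := by
    have := hM.inv.1
    rwa [Matrix.IsHermitian, conjTranspose_eq_transpose_of_trivial] at this
  have hMinv : M * M⁻¹ = 1 := Matrix.mul_nonsing_inv M
    ((Matrix.isUnit_iff_isUnit_det M).mp hM.isUnit)
  have hMa : M *ᵥ a = ω := by rw [ha, Matrix.mulVec_mulVec, hMinv, Matrix.one_mulVec]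
  have hωa : ω ⬝ᵥ a = 1 - α := by rw [hα]; ring
  have h1α : 0 ≤ 1 - α := by
    rw [← hωa, ha]
    have := hM.inv.posSemidef.dotProduct_mulVec_nonneg ω
    simpa using this
  have haω : a ⬝ᵥ ω = 1 - α := by rw [dotProduct_comm]; exact hωa
  have hCS2 : ∀ x : Fin d → ℝ, (ω ⬝ᵥ x) ^ 2 ≤ (1 - α) * (x ⬝ᵥ M *ᵥ x) := by
    intro x
    have h := RandersDualAux.cs hM.posSemidef a x
    have h1 : a ⬝ᵥ M *ᵥ x = ω ⬝ᵥ x := by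
      rw [RandersDualAux.dot_symm hMsym a x, hMa, dotProduct_comm]
    have h2 : a ⬝ᵥ M *ᵥ a = 1 - α := by rw [hMa]; exact haω
    rw [h1, h2] at h
    exact h
  have hMq : ∀ x : Fin d → ℝ, 0 ≤ x ⬝ᵥ M *ᵥ x := fun x => by
    simpa using hM.posSemidef.dotProduct_mulVec_nonneg x
  have hNq : ∀ x : Fin d → ℝ, x ⬝ᵥ N *ᵥ x = x ⬝ᵥ M *ᵥ x - (ω ⬝ᵥ x) ^ 2 := by
    intro x
    rw [hN, Matrix.sub_mulVec, dotProduct_sub, RandersDualAux.vecMulVec_mulVec',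
      dotProduct_smul, smul_eq_mul, dotProduct_comm x ω]
    ring
  have hNsym : Nᵀ = N := by
    rw [hN, Matrix.transpose_sub, hMsym, RandersDualAux.transpose_vecMulVec]
  have hNpos : N.PosDef := by
    refine Matrix.PosDef.of_dotProduct_mulVec_pos ?_ ?_
    · rw [Matrix.IsHermitian, conjTranspose_eq_transpose_of_trivial]; exact hNsym
    · intro x hx
      simp only [star_trivial]
      have h1 := hCS2 x
      have h2 : 0 < x ⬝ᵥ M *ᵥ x := by simpa using hM.dotProduct_mulVec_pos hx
      rw [hNq x]
      nlinarith
  have hNps := hNpos.posSemidef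
  have hNq0 : ∀ x : Fin d → ℝ, 0 ≤ x ⬝ᵥ N *ᵥ x := fun x => by simpa using hNps.dotProduct_mulVec_nonneg x
  have hNK : N * K = 1 := by
    have h1 : M * vecMulVec a a = vecMulVec ω a := by
      rw [RandersDualAux.mul_vecMulVec, hMa]
    have h2 : vecMulVec ω ω * M⁻¹ = vecMulVec ω a := by
      rw [RandersDualAux.vecMulVec_mul]
      rw [← Matrix.mulVec_transpose, hMinvsym]
    have h3 : vecMulVec ω ω * vecMulVec a a = (1 - α) • vecMulVec ω a := by
      rw [RandersDualAux.vecMulVec_mul_vecMulVec, hωa]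
    have hK : K = M⁻¹ + (1 / α) • vecMulVec a a := by
      rw [hKdef, hMstar]
      ext i j
      simp only [Matrix.add_apply, Matrix.smul_apply, smul_eq_mul]
      field_simp
    rw [hN, hK, Matrix.sub_mul, Matrix.mul_add, Matrix.mul_add, Matrix.mul_smul,
      Matrix.mul_smul, hMinv, h1, h2, h3]
    ext i j
    simp only [Matrix.add_apply, Matrix.sub_apply, Matrix.smul_apply, smul_eq_mul]
    field_simp
    ring
  have hKN : K * N = 1 := mul_eq_one_comm.mp hNK
  have hKinv : N⁻¹ = K := Matrix.inv_eq_right_inv hNK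
  have hKpos : K.PosDef := hKinv ▸ hNpos.inv
  have hNKv : ∀ x : Fin d → ℝ, N *ᵥ K *ᵥ x = x := fun x => by
    rw [Matrix.mulVec_mulVec, hNK, Matrix.one_mulVec]
  have hKq : ∀ x y : Fin d → ℝ, x ⬝ᵥ K *ᵥ y = α * (x ⬝ᵥ Mstar *ᵥ y) := by
    intro x y
    rw [hKdef, Matrix.smul_mulVec, dotProduct_smul, smul_eq_mul]
  set X := v ⬝ᵥ Mstar *ᵥ v with hX
  have hXnn : 0 ≤ X := by
    have h := hKpos.posSemidef.dotProduct_mulVec_nonneg v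
    simp only [star_trivial] at h
    rw [hKq] at h
    nlinarith
  have hNa : N *ᵥ a = α • ω := by
    rw [hN, Matrix.sub_mulVec, RandersDualAux.vecMulVec_mulVec', hMa, hωa]
    ext i
    simp only [Pi.sub_apply, Pi.smul_apply, smul_eq_mul]
    ring
  have hNc : N *ᵥ ωstar = -ω := by
    rw [hωstar, Matrix.mulVec_smul, hNa]
    ext i
    simp only [Pi.smul_apply, Pi.neg_apply, smul_eq_mul]
    field_simp
  have hcω : ωstar ⬝ᵥ ω = -((1 - α) / α) := by
    rw [hωstar, smul_dotProduct, haω]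
    simp only [smul_eq_mul]
    ring
  have hfeas : ∀ b, F b ≤ 1 ↔ b ⬝ᵥ N *ᵥ b + 2 * (ω ⬝ᵥ b) ≤ 1 := by
    intro b
    rw [hF b, hNq b]
    have hq := hMq b
    have hs0 : 0 ≤ Real.sqrt (b ⬝ᵥ M *ᵥ b) := Real.sqrt_nonneg _
    have hss : Real.sqrt (b ⬝ᵥ M *ᵥ b) ^ 2 = b ⬝ᵥ M *ᵥ b := Real.sq_sqrt hq
    constructor
    · intro h
      have h1' : 0 ≤ 1 - ω ⬝ᵥ b - Real.sqrt (b ⬝ᵥ M *ᵥ b) := by linarith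
      have h2' : 0 ≤ Real.sqrt (b ⬝ᵥ M *ᵥ b) + (1 - ω ⬝ᵥ b) := by linarith
      nlinarith [mul_nonneg h1' h2']
    · intro h
      have hcs := hCS2 b
      have ht1 : ω ⬝ᵥ b ≤ 1 := by
        by_contra hcon
        push_neg at hcon
        have hq' : b ⬝ᵥ M *ᵥ b ≤ (1 - ω ⬝ᵥ b) ^ 2 := by nlinarith
        nlinarith [sq_nonneg (1 - ω ⬝ᵥ b)]
      have hq' : b ⬝ᵥ M *ᵥ b ≤ (1 - ω ⬝ᵥ b) ^ 2 := by nlinarith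
      have hle : Real.sqrt (b ⬝ᵥ M *ᵥ b) ≤ 1 - ω ⬝ᵥ b := by
        calc Real.sqrt (b ⬝ᵥ M *ᵥ b) ≤ Real.sqrt ((1 - ω ⬝ᵥ b) ^ 2) := Real.sqrt_le_sqrt hq'
          _ = |1 - ω ⬝ᵥ b| := Real.sqrt_sq_eq_abs _
          _ = 1 - ω ⬝ᵥ b := abs_of_nonneg (by linarith)
      linarith
  have hq_expand : ∀ u : Fin d → ℝ,
      (ωstar + u) ⬝ᵥ N *ᵥ (ωstar + u) + 2 * (ω ⬝ᵥ (ωstar + u))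
        = u ⬝ᵥ N *ᵥ u - (1 - α) / α := by
    intro u
    have e1 : ωstar ⬝ᵥ N *ᵥ u = -(ω ⬝ᵥ u) := by
      rw [RandersDualAux.dot_symm hNsym ωstar u, hNc, dotProduct_neg, dotProduct_comm]
    have e2 : u ⬝ᵥ N *ᵥ ωstar = -(ω ⬝ᵥ u) := by
      rw [hNc, dotProduct_neg, dotProduct_comm]
    have e3 : ωstar ⬝ᵥ N *ᵥ ωstar = (1 - α) / α := by
      rw [hNc, dotProduct_neg, hcω]
      ring
    rw [Matrix.mulVec_add, dotProduct_add, add_dotProduct, add_dotProduct, dotProduct_add,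
      e1, e2, e3, dotProduct_comm ω ωstar, hcω]
    ring
  have hfeasu : ∀ u : Fin d → ℝ, F (ωstar + u) ≤ 1 ↔ u ⬝ᵥ N *ᵥ u ≤ 1 / α := by
    intro u
    rw [hfeas, hq_expand]
    have h2 : (1 - α) / α + 1 = 1 / α := by field_simp; ring
    constructor <;> intro h <;> linarith
  have hKNK : (K *ᵥ v) ⬝ᵥ N *ᵥ (K *ᵥ v) = α * X := by
    rw [hNKv v, dotProduct_comm, hKq]
  have hub : ∀ x ∈ {x : ℝ | ∃ b : Fin d → ℝ, F b ≤ 1 ∧ x = v ⬝ᵥ b},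
      x ≤ Real.sqrt X + ωstar ⬝ᵥ v := by
    rintro x ⟨b, hb, rfl⟩
    have hbu : ωstar + (b - ωstar) = b := by abel
    have hfeas' : (b - ωstar) ⬝ᵥ N *ᵥ (b - ωstar) ≤ 1 / α :=
      (hfeasu (b - ωstar)).mp (by rw [hbu]; exact hb)
    have hvu2 : (v ⬝ᵥ (b - ωstar)) ^ 2 ≤ X := by
      have hrw : v ⬝ᵥ (b - ωstar) = (K *ᵥ v) ⬝ᵥ N *ᵥ (b - ωstar) := by
        rw [dotProduct_mulVec, ← Matrix.mulVec_transpose, hNsym, Matrix.mulVec_mulVec, hNK,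
          Matrix.one_mulVec]
      have hcs := RandersDualAux.cs hNps (K *ᵥ v) (b - ωstar)
      rw [hKNK] at hcs
      rw [hrw]
      calc ((K *ᵥ v) ⬝ᵥ N *ᵥ (b - ωstar)) ^ 2
          ≤ α * X * ((b - ωstar) ⬝ᵥ N *ᵥ (b - ωstar)) := hcs
        _ ≤ α * X * (1 / α) := by
            apply mul_le_mul_of_nonneg_left hfeas'
            positivity
        _ = X := by field_simp
    have hvu : v ⬝ᵥ (b - ωstar) ≤ Real.sqrt X := by
      have h1 := Real.sqrt_le_sqrt hvu2
      rw [Real.sqrt_sq_eq_abs] at h1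
      exact le_trans (le_abs_self _) h1
    have hsplit : v ⬝ᵥ b = v ⬝ᵥ ωstar + v ⬝ᵥ (b - ωstar) := by
      rw [← dotProduct_add]
      congr 1
      abel
    rw [hsplit, dotProduct_comm v ωstar]
    linarith
  have hmem : Real.sqrt X + ωstar ⬝ᵥ v ∈
      {x : ℝ | ∃ b : Fin d → ℝ, F b ≤ 1 ∧ x = v ⬝ᵥ b} := by
    by_cases hX0 : X = 0
    · refine ⟨ωstar, ?_, ?_⟩
      · have h0 : (0 : Fin d → ℝ) ⬝ᵥ N *ᵥ 0 ≤ 1 / α := by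
          simp only [zero_dotProduct]
          positivity
        have := (hfeasu 0).mpr h0
        simpa using this
      · rw [hX0, Real.sqrt_zero, dotProduct_comm]
        ring
    · have hXpos : 0 < X := lt_of_le_of_ne hXnn (Ne.symm hX0)
      have hs : 0 < Real.sqrt X := Real.sqrt_pos.mpr hXpos
      have hmulself : Real.sqrt X * Real.sqrt X = X := Real.mul_self_sqrt hXnn
      refine ⟨ωstar + (Real.sqrt X)⁻¹ • (Mstar *ᵥ v), ?_, ?_⟩
      · apply (hfeasu _).mpr
        have hMv : Mstar *ᵥ v = (1 / α) • (K *ᵥ v) := by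
          rw [hKdef, Matrix.smul_mulVec]
          ext i
          simp only [Pi.smul_apply, smul_eq_mul]
          field_simp
        have hq1 : (Mstar *ᵥ v) ⬝ᵥ N *ᵥ (Mstar *ᵥ v) = X / α := by
          rw [hMv, Matrix.mulVec_smul, smul_dotProduct, dotProduct_smul, hKNK]
          simp only [smul_eq_mul]
          field_simp
        rw [Matrix.mulVec_smul, smul_dotProduct, dotProduct_smul, hq1]
        simp only [smul_eq_mul]
        rw [div_eq_mul_inv, ← hmulself]
        field_simp
        simp [Real.sqrt_sq hs.le]
      · rw [dotProduct_add, dotProduct_smul, ← hX, smul_eq_mul, dotProduct_comm v ωstar]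
        rw [← hmulself]
        field_simp
        rw [Real.sqrt_sq hs.le]
        ring
  rw [hFstar v]
  exact IsGreatest.csSup_eq ⟨hmem, hub⟩
end

section
/- Let M be symmetric positive definite, ω with ω^⊤ M^{-1} ω < 1, and (M*, ω*) the dual Randers data. Then applying the duality transformation twice recovers the original data: (M**, ω**) = (M, ω), where M** = (1/(α*)²)(α* (M*)^{-1} + ((M*)^{-1}ω*)((M*)^{-1}ω*)^⊤), ω** = -(1/α*)(M*)^{-1}ω*, and α* = 1 - ω*^⊤(M*)^{-1}ω*. -/
open Matrix

private lemma my_mul_vecMulVec {d : ℕ} (A : Matrix (Fin d) (Fin d) ℝ)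
    (u v : Fin d → ℝ) : A * vecMulVec u v = vecMulVec (A *ᵥ u) v := by
  ext i j
  simp [Matrix.mul_apply, vecMulVec_apply, mulVec, dotProduct,
    Finset.sum_mul, mul_assoc]

private lemma my_vecMulVec_mul {d : ℕ} (u v : Fin d → ℝ)
    (A : Matrix (Fin d) (Fin d) ℝ) : vecMulVec u v * A = vecMulVec u (v ᵥ* A) := by
  ext i j
  simp [Matrix.mul_apply, vecMulVec_apply, vecMul, dotProduct,
    Finset.mul_sum, mul_assoc]

private lemma my_vecMulVec_mulVec {d : ℕ} (u v x : Fin d → ℝ) :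
    vecMulVec u v *ᵥ x = (v ⬝ᵥ x) • u := by
  ext i
  simp [mulVec, vecMulVec_apply, dotProduct, Finset.mul_sum, mul_assoc,
    mul_comm, mul_left_comm]

theorem dual_randers_involutive {d : ℕ} (M : Matrix (Fin d) (Fin d) ℝ)
    (hM : M.PosDef) (ω : Fin d → ℝ) (hω : ω ⬝ᵥ M⁻¹ *ᵥ ω < 1)
    (α : ℝ) (hα : α = 1 - ω ⬝ᵥ M⁻¹ *ᵥ ω)
    (Mstar : Matrix (Fin d) (Fin d) ℝ)
    (hMstar : Mstar = (1 / α ^ 2) •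
      (α • M⁻¹ + vecMulVec (M⁻¹ *ᵥ ω) (M⁻¹ *ᵥ ω)))
    (ωstar : Fin d → ℝ) (hωstar : ωstar = -(1 / α) • (M⁻¹ *ᵥ ω))
    (αstar : ℝ) (hαstar : αstar = 1 - ωstar ⬝ᵥ Mstar⁻¹ *ᵥ ωstar)
    (Mstarstar : Matrix (Fin d) (Fin d) ℝ)
    (hMstarstar : Mstarstar = (1 / αstar ^ 2) •
      (αstar • Mstar⁻¹ + vecMulVec (Mstar⁻¹ *ᵥ ωstar) (Mstar⁻¹ *ᵥ ωstar)))
    (ωstarstar : Fin d → ℝ)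
    (hωstarstar : ωstarstar = -(1 / αstar) • (Mstar⁻¹ *ᵥ ωstar)) :
    Mstarstar = M ∧ ωstarstar = ω := by
  set u := M⁻¹ *ᵥ ω with hu
  set s := ω ⬝ᵥ u with hs
  have hαpos : 0 < α := by rw [hα]; linarith
  have hα0 : α ≠ 0 := ne_of_gt hαpos
  have hMinv : IsUnit M.det := isUnit_iff_ne_zero.mpr hM.det_pos.ne'
  have hMsymm : Mᵀ = M := hM.1
  have hMu : M *ᵥ u = ω := by
    rw [hu, mulVec_mulVec, mul_nonsing_inv M hMinv, one_mulVec]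
  have huω : u ⬝ᵥ ω = s := by rw [hs, dotProduct_comm]
  -- The inverse of Mstar is N := α • (M - ω ωᵀ)
  set N : Matrix (Fin d) (Fin d) ℝ := α • (M - vecMulVec ω ω) with hN
  have hMN : Mstar * N = 1 := by
    rw [hMstar, hN, Matrix.smul_mul, Matrix.mul_smul, smul_smul]
    have h1 : (1 / α ^ 2) * α = 1 / α := by field_simp
    rw [h1]
    rw [Matrix.add_mul, Matrix.mul_sub, Matrix.mul_sub, Matrix.smul_mul,
      Matrix.smul_mul, nonsing_inv_mul M hMinv,
      my_mul_vecMulVec, my_vecMulVec_mul, my_vecMulVec_mul]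
    have huM : u ᵥ* M = ω := by rw [← mulVec_transpose, hMsymm, hMu]
    have huωω : u ᵥ* vecMulVec ω ω = s • ω := by
      ext j
      simp [vecMul, vecMulVec_apply, dotProduct, Finset.sum_mul, mul_assoc,
        hs, mul_comm, Finset.mul_sum]
    rw [huM, huωω, hu]
    have : vecMulVec (M⁻¹ *ᵥ ω) ω = vecMulVec u ω := by rw [hu]
    rw [this]
    have hsm : vecMulVec u (s • ω) = s • vecMulVec u ω := by
      ext i j; simp [vecMulVec_apply]; ring
    rw [hsm]
    have hαs : α + s = 1 := by rw [hα, hs]; ring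
    have : α • (1 : Matrix (Fin d) (Fin d) ℝ) - α • vecMulVec u ω +
        (vecMulVec u ω - s • vecMulVec u ω) = α • 1 := by
      match_scalars <;> linarith
    rw [this, smul_smul]
    rw [one_div_mul_cancel hα0, one_smul]
  have hNinv : Mstar⁻¹ = N := inv_eq_right_inv hMN
  have hNωstar : Mstar⁻¹ *ᵥ ωstar = -α • ω := by
    rw [hNinv, hωstar, hN, smul_mulVec, mulVec_smul, sub_mulVec, hMu,
      my_vecMulVec_mulVec]
    have h2 : (ω : Fin d → ℝ) - (ω ⬝ᵥ u) • ω = α • ω := by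
      rw [← hs, hα]; module
    rw [h2, smul_smul, smul_smul]
    match_scalars
    field_simp
  have hαstar_eq : αstar = α := by
    rw [hαstar, hNωstar, hωstar]
    rw [smul_dotProduct, dotProduct_smul, huω]
    have h1s : (1:ℝ) - ω ⬝ᵥ u ≠ 0 := by rw [← hs, ← hα]; exact hα0
    have hss : -(1 / α) * (-α * s) = s := by
      rw [neg_mul, neg_mul, mul_neg, neg_neg, ← mul_assoc, one_div_mul_cancel hα0, one_mul]
    rw [smul_eq_mul, smul_eq_mul, hss]
    exact hα.symm
  constructor
  · rw [hMstarstar, hαstar_eq, hNωstar, hNinv, hN]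
    have : vecMulVec (-α • ω) (-α • ω) = (α * α) • vecMulVec ω ω := by
      ext i j; simp [vecMulVec_apply]; ring
    rw [this, smul_smul]
    ext i j
    simp [Matrix.add_apply, Matrix.smul_apply, Matrix.sub_apply, vecMulVec_apply]
    field_simp
    ring
  · rw [hωstarstar, hαstar_eq, hNωstar, smul_smul]
    have : -(1 / α) * -α = 1 := by field_simp
    rw [this, one_smul]
end
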